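/- Gamma-distribution limit of the rescaled posterior frequency (Lemma 3.4(iii) of the paper): fix θ₁, θ₂ > 0, a natural number n₁, and β̃ < 1. For each natural number n₂ set n = n₁ + n₂, β = β̃·n₂, and let φ_β^{(n₁,n₂)}(x) := x^{θ₁+n₁-1}(1-x)^{θ₂+n₂-1}e^{βx} / I(n₁,n₂,β), where I(n₁,n₂,β) := ∫₀¹ x^{θ₁+n₁-1}(1-x)^{θ₂+n₂-1}e^{βx} dx. Then for every bounded continuous function f : ℝ → ℝ, lim_{n₂→∞} ∫₀¹ f(n₂·x) φ_{β̃n₂}^{(n₁,n₂)}(x) dx = ∫₀^∞ f(y) · ((1-β̃)^{n₁+θ₁}/Γ(n₁+θ₁)) · y^{n₁+θ₁-1} e^{(β̃-1)y} dy; that is, if X has density φ_{β̃n₂}^{(n₁,n₂)} on [0,1], then n₂·X converges in distribution to a Gamma(n₁+θ₁, 1-β̃) random variable. -/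
import Mathlib


open Real Filter Topology
open MeasureTheory Set

lemma gammaAux_integrableOn {a r : ℝ} (ha : 0 < a) (hr : 0 < r) :
    IntegrableOn (fun y : ℝ => y ^ (a - 1) * Real.exp (-(r * y))) (Set.Ioi 0) := by
  have h := Real.GammaIntegral_convergent ha
  have h2 : IntegrableOn (fun y : ℝ => Real.exp (-(r * y)) * (r * y) ^ (a - 1)) (Set.Ioi 0) := by
    have := (integrableOn_Ioi_comp_mul_left_iff
      (fun x : ℝ => Real.exp (-x) * x ^ (a - 1)) 0 hr).mpr (by simpa using h)
    simpa using this
  have h3 := h2.const_mul ((r : ℝ) ^ (a - 1))⁻¹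
  apply MeasureTheory.IntegrableOn.congr_fun h3 (fun y hy => ?_) measurableSet_Ioi
  have hy' : (0:ℝ) < y := hy
  rw [Real.mul_rpow hr.le hy'.le]
  field_simp [(Real.rpow_pos_of_pos hr (a-1)).ne']

lemma tendsto_rpow_factor (q : ℝ) {y : ℝ} (hy : 0 < y) :
    Tendsto (fun n : ℕ => (1 - y / n) ^ (q + n - 1)) atTop (𝓝 (Real.exp (-y))) := by
  have hbase : Tendsto (fun n : ℕ => 1 - y / n) atTop (𝓝 1) := by
    have : Tendsto (fun n : ℕ => y / n) atTop (𝓝 0) :=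
      tendsto_const_nhds.div_atTop tendsto_natCast_atTop_atTop
    simpa using tendsto_const_nhds.sub this
  have h1 : Tendsto (fun n : ℕ => (1 - y / n) ^ (n : ℕ)) atTop (𝓝 (Real.exp (-y))) := by
    have := Real.tendsto_one_add_div_pow_exp (-y)
    simpa [sub_eq_add_neg, neg_div] using this
  have h2 : Tendsto (fun n : ℕ => (1 - y / n) ^ (q - 1)) atTop (𝓝 1) := by
    have := hbase.rpow_const (p := q - 1) (Or.inl one_ne_zero)
    simpa using this
  have h3 : Tendsto (fun n : ℕ => ((1 - y / n) ^ (n : ℕ)) * (1 - y / n) ^ (q - 1))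
      atTop (𝓝 (Real.exp (-y) * 1)) := h1.mul h2
  rw [mul_one] at h3
  apply h3.congr'
  filter_upwards [eventually_gt_atTop ⌈y⌉₊] with n hn
  have hny : y < n := lt_of_le_of_lt (Nat.le_ceil y) (by exact_mod_cast hn)
  have hpos : (0:ℝ) < 1 - y / n := by
    have hn0 : (0:ℝ) < n := lt_trans hy hny
    rw [sub_pos, div_lt_one hn0]; exact hny
  rw [← Real.rpow_natCast (1 - y / n) n, ← Real.rpow_add hpos]
  ring_nf


lemma rpow_factor_bound {q : ℝ} (hq : 0 < q) {n : ℕ} (hn : 1 ≤ n) {y : ℝ}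
    (hy : 0 < y) (hyn : y ≤ n) :
    (1 - y / n) ^ (q + n - 1) ≤ Real.exp (max (1 - q) 0) * Real.exp (-y) := by
  have hn0 : (0:ℝ) < n := by exact_mod_cast hn
  have ht0 : 0 < y / n := div_pos hy hn0
  have ht1 : y / n ≤ 1 := (div_le_one hn0).mpr hyn
  have h1 : (0:ℝ) ≤ 1 - y / n := by linarith
  have h2 : 1 - y / n ≤ Real.exp (-(y / n)) := by
    have := Real.add_one_le_exp (-(y / n)); linarith
  have hp : (0:ℝ) ≤ q + n - 1 := by
    have : (1:ℝ) ≤ n := by exact_mod_cast hn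
    linarith
  calc (1 - y / n) ^ (q + n - 1) ≤ (Real.exp (-(y / n))) ^ (q + n - 1) :=
        Real.rpow_le_rpow h1 h2 hp
    _ = Real.exp (-(y / n) * (q + n - 1)) := by
        rw [← Real.exp_mul]
    _ ≤ Real.exp (max (1 - q) 0) * Real.exp (-y) := by
        rw [← Real.exp_add]
        apply Real.exp_le_exp.mpr
        have key : -(y / n) * (q + n - 1) = -y + (y / n) * (1 - q) := by
          field_simp; ring
        rw [key]
        have h3 : (y / n) * (1 - q) ≤ max (1 - q) 0 := by
          rcases le_or_gt (1 - q) 0 with h | h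
          · have : (y / n) * (1 - q) ≤ 0 := mul_nonpos_of_nonneg_of_nonpos ht0.le h
            exact this.trans (le_max_right _ _)
          · have : (y / n) * (1 - q) ≤ 1 * (1 - q) :=
              mul_le_mul_of_nonneg_right ht1 h.le
            simpa using this.trans (le_max_left _ _)
        linarith


lemma subst_lemma (a q c : ℝ) (g : ℝ → ℝ) {n : ℕ} (hn : 1 ≤ n) :
    (∫ x in (0:ℝ)..1, g (n * x) * (x ^ (a - 1) * (1 - x) ^ (q + n - 1) * Real.exp (c * n * x)))
      = (n:ℝ) ^ (-a) * ∫ y, (Set.Ioc (0:ℝ) (n:ℝ)).indicator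
          (fun y => g y * (y ^ (a - 1) * (1 - y / n) ^ (q + n - 1) * Real.exp (c * y))) y := by
  have hn0 : (0:ℝ) < n := by exact_mod_cast hn
  set G : ℝ → ℝ :=
    fun y => g y * (y ^ (a - 1) * (1 - y / n) ^ (q + n - 1) * Real.exp (c * y)) with hG
  have key : ∀ x ∈ Set.uIcc (0:ℝ) 1, G (n * x) =
      (n:ℝ) ^ (a - 1) * (g (n * x) *
        (x ^ (a - 1) * (1 - x) ^ (q + n - 1) * Real.exp (c * n * x))) := by
    intro x hx
    rw [Set.uIcc_of_le (by norm_num : (0:ℝ) ≤ 1)] at hx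
    have hx0 : 0 ≤ x := hx.1
    simp only [hG]
    rw [Real.mul_rpow hn0.le hx0, mul_div_cancel_left₀ _ hn0.ne']
    ring_nf
  symm
  calc (n:ℝ) ^ (-a) * ∫ y, (Set.Ioc (0:ℝ) (n:ℝ)).indicator G y
      = (n:ℝ) ^ (-a) * ∫ y in Set.Ioc (0:ℝ) (n:ℝ), G y := by
        rw [integral_indicator measurableSet_Ioc]
    _ = (n:ℝ) ^ (-a) * ∫ y in (0:ℝ)..(n:ℝ), G y := by
        rw [intervalIntegral.integral_of_le hn0.le]
    _ = (n:ℝ) ^ (-a) * ((n:ℝ) • ∫ x in (0:ℝ)..1, G ((n:ℝ) * x)) := by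
        rw [intervalIntegral.smul_integral_comp_mul_left G (n:ℝ)]
        norm_num
    _ = (n:ℝ) ^ (-a) * ((n:ℝ) * ((n:ℝ) ^ (a - 1) *
          ∫ x in (0:ℝ)..1, g (n * x) *
            (x ^ (a - 1) * (1 - x) ^ (q + n - 1) * Real.exp (c * n * x)))) := by
        rw [intervalIntegral.integral_congr key, intervalIntegral.integral_const_mul]
        simp [smul_eq_mul]
    _ = _ := by
        rw [← mul_assoc, ← mul_assoc]
        have h1 : (n:ℝ) ^ (-a) * (n:ℝ) ^ (a - 1) = (n:ℝ) ^ (-1:ℝ) := by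
          rw [← Real.rpow_add hn0]; ring_nf
        have : (n:ℝ) ^ (-a) * (n:ℝ) * (n:ℝ) ^ (a - 1) = 1 := by
          calc (n:ℝ) ^ (-a) * (n:ℝ) * (n:ℝ) ^ (a - 1)
              = (n:ℝ) * ((n:ℝ) ^ (-a) * (n:ℝ) ^ (a - 1)) := by ring
            _ = (n:ℝ) * (n:ℝ) ^ (-1:ℝ) := by rw [h1]
            _ = 1 := by rw [Real.rpow_neg_one]; field_simp
        rw [this, one_mul]

lemma dct_lemma (a q βt : ℝ) (ha : 0 < a) (hq : 0 < q) (hβ : βt < 1)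
    (g : ℝ → ℝ) (hg : Continuous g) {C : ℝ} (hC : ∀ x, |g x| ≤ C) :
    Tendsto (fun n : ℕ => ∫ y, (Set.Ioc (0:ℝ) (n:ℝ)).indicator
        (fun y => g y * (y ^ (a - 1) * (1 - y / n) ^ (q + n - 1) * Real.exp (βt * y))) y)
      atTop
      (𝓝 (∫ y, (Set.Ioi (0:ℝ)).indicator
        (fun y => g y * (y ^ (a - 1) * Real.exp ((βt - 1) * y))) y)) := by
  have hC0 : 0 ≤ C := (abs_nonneg _).trans (hC 0)
  set D : ℝ := C * Real.exp (max (1 - q) 0) with hD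
  have hD0 : 0 ≤ D := by positivity
  apply tendsto_integral_filter_of_dominated_convergence
    (bound := fun y => (Set.Ioi (0:ℝ)).indicator
      (fun y => D * (y ^ (a - 1) * Real.exp (-((1 - βt) * y)))) y)
  · -- measurability
    filter_upwards with n
    apply Measurable.aestronglyMeasurable
    apply Measurable.indicator _ measurableSet_Ioc
    exact hg.measurable.mul (((measurable_id'.pow_const (a-1)).mul
      ((measurable_const.sub (measurable_id'.div_const _)).pow_const (q + n - 1))).mul
      ((continuous_const.mul continuous_id).rexp.measurable))
  · -- bound
    filter_upwards [eventually_ge_atTop 1] with n hn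
    apply Eventually.of_forall; intro y
    by_cases hmem : y ∈ Set.Ioc (0:ℝ) (n:ℝ)
    · obtain ⟨hy, hyn⟩ := hmem
      rw [Set.indicator_of_mem (show y ∈ Set.Ioc (0:ℝ) (n:ℝ) from ⟨hy, hyn⟩),
        Set.indicator_of_mem (Set.mem_Ioi.mpr hy)]
      have h1 : (0:ℝ) ≤ 1 - y / n := by
        have hn0 : (0:ℝ) < n := by exact_mod_cast hn
        have := (div_le_one hn0).mpr hyn
        linarith
      have hA : (0:ℝ) ≤ y ^ (a - 1) := Real.rpow_nonneg hy.le _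
      have hB : (0:ℝ) ≤ (1 - y / n) ^ (q + n - 1) := Real.rpow_nonneg h1 _
      have hstuff : (0:ℝ) ≤ y ^ (a - 1) * (1 - y / n) ^ (q + n - 1) * Real.exp (βt * y) := by
        positivity
      rw [Real.norm_eq_abs, abs_mul, abs_of_nonneg hstuff]
      have key : y ^ (a - 1) * (1 - y / n) ^ (q + n - 1) * Real.exp (βt * y)
          ≤ Real.exp (max (1 - q) 0) * (y ^ (a - 1) * Real.exp (-((1 - βt) * y))) := by
        have h2 := rpow_factor_bound hq hn hy hyn
        have h3 : y ^ (a - 1) * (1 - y / n) ^ (q + n - 1) * Real.exp (βt * y)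
            ≤ y ^ (a - 1) * (Real.exp (max (1 - q) 0) * Real.exp (-y)) * Real.exp (βt * y) := by
          apply mul_le_mul_of_nonneg_right _ (Real.exp_pos _).le
          exact mul_le_mul_of_nonneg_left h2 hA
        refine h3.trans (le_of_eq ?_)
        rw [show -((1 - βt) * y) = -y + βt * y by ring, Real.exp_add]
        ring
      calc |g y| * (y ^ (a - 1) * (1 - y / n) ^ (q + n - 1) * Real.exp (βt * y))
          ≤ C * (y ^ (a - 1) * (1 - y / n) ^ (q + n - 1) * Real.exp (βt * y)) :=
            mul_le_mul_of_nonneg_right (hC y) hstuff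
        _ ≤ C * (Real.exp (max (1 - q) 0) * (y ^ (a - 1) * Real.exp (-((1 - βt) * y)))) :=
            mul_le_mul_of_nonneg_left key hC0
        _ = D * (y ^ (a - 1) * Real.exp (-((1 - βt) * y))) := by rw [hD]; ring
    · rw [Set.indicator_of_notMem hmem, norm_zero]
      apply Set.indicator_nonneg
      intro y hy
      have : (0:ℝ) ≤ y ^ (a - 1) := Real.rpow_nonneg (le_of_lt hy) _
      positivity
  · -- integrability of bound
    rw [integrable_indicator_iff measurableSet_Ioi]
    exact ((gammaAux_integrableOn ha (by linarith : (0:ℝ) < 1 - βt)).const_mul D)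
  · -- pointwise convergence
    filter_upwards with y
    by_cases hy : 0 < y
    · rw [Set.indicator_of_mem (Set.mem_Ioi.mpr hy)]
      have hlim : Tendsto (fun n : ℕ =>
          g y * (y ^ (a - 1) * (1 - y / n) ^ (q + n - 1) * Real.exp (βt * y))) atTop
          (𝓝 (g y * (y ^ (a - 1) * Real.exp (-y) * Real.exp (βt * y)))) := by
        exact tendsto_const_nhds.mul
          (((tendsto_const_nhds.mul (tendsto_rpow_factor q hy)).mul tendsto_const_nhds))
      have heq : g y * (y ^ (a - 1) * Real.exp (-y) * Real.exp (βt * y))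
          = g y * (y ^ (a - 1) * Real.exp ((βt - 1) * y)) := by
        rw [show (βt - 1) * y = -y + βt * y by ring, Real.exp_add]
        ring
      rw [heq] at hlim
      apply hlim.congr'
      filter_upwards [eventually_ge_atTop ⌈y⌉₊] with n hn
      have hyn : y ≤ n := (Nat.le_ceil y).trans (by exact_mod_cast hn)
      rw [Set.indicator_of_mem (show y ∈ Set.Ioc (0:ℝ) (n:ℝ) from ⟨hy, hyn⟩)]
    · have h0 : ∀ n : ℕ, (Set.Ioc (0:ℝ) (n:ℝ)).indicator
          (fun y => g y * (y ^ (a - 1) * (1 - y / n) ^ (q + n - 1) * Real.exp (βt * y))) y = 0 :=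
        fun n => Set.indicator_of_notMem (fun h => hy h.1) _
      simp only [h0]
      rw [Set.indicator_of_notMem (by simpa using hy)]
      exact tendsto_const_nhds


/-- Gamma-distribution limit of the rescaled posterior frequency (Lemma 3.4(iii)):
with `β = β̃·n₂`, `β̃ < 1`, and the posterior density
`φ_{β̃n₂}^{(n₁,n₂)}(x) = x^{θ₁+n₁-1}(1-x)^{θ₂+n₂-1}e^{β̃n₂x}/I(n₁,n₂,β̃n₂)`,
for every bounded continuous `f : ℝ → ℝ`,
`lim_{n₂→∞} ∫₀¹ f(n₂x) φ_{β̃n₂}^{(n₁,n₂)}(x) dx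
  = ∫₀^∞ f(y) ((1-β̃)^{n₁+θ₁}/Γ(n₁+θ₁)) y^{n₁+θ₁-1} e^{(β̃-1)y} dy`;
i.e. `n₂·X` converges in distribution to a `Gamma(n₁+θ₁, 1-β̃)` random variable. -/
theorem rescaled_posterior_gamma_limit (θ₁ θ₂ βt : ℝ)
    (hθ₁ : 0 < θ₁) (hθ₂ : 0 < θ₂) (hβ : βt < 1) (n₁ : ℕ)
    (f : ℝ → ℝ) (hf : Continuous f) (hbdd : ∃ C : ℝ, ∀ x : ℝ, |f x| ≤ C) :
    Filter.Tendsto (fun n₂ : ℕ =>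
        ∫ x in (0:ℝ)..1,
          f (n₂ * x) *
            (x ^ (θ₁ + n₁ - 1) * (1 - x) ^ (θ₂ + n₂ - 1) * Real.exp (βt * n₂ * x) /
              ∫ y in (0:ℝ)..1,
                y ^ (θ₁ + n₁ - 1) * (1 - y) ^ (θ₂ + n₂ - 1) * Real.exp (βt * n₂ * y)))
      Filter.atTop
      (𝓝 (∫ y in Set.Ioi (0:ℝ),
        f y * ((1 - βt) ^ ((n₁ : ℝ) + θ₁) / Real.Gamma ((n₁ : ℝ) + θ₁) *
          y ^ ((n₁ : ℝ) + θ₁ - 1) * Real.exp ((βt - 1) * y)))) := by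
  obtain ⟨C, hC⟩ := hbdd
  set a : ℝ := θ₁ + n₁ with ha_def
  have ha : 0 < a := by positivity
  have h1β : (0:ℝ) < 1 - βt := by linarith
  have hΓ : 0 < Real.Gamma a := Real.Gamma_pos_of_pos ha
  -- the two DCT limits
  have hdf := dct_lemma a θ₂ βt ha hθ₂ hβ f hf hC
  have hd1 := dct_lemma a θ₂ βt ha hθ₂ hβ (fun _ => 1) continuous_const
    (C := 1) (fun x => by norm_num)
  -- value of the denominator limit
  set L1 : ℝ := ∫ y, (Set.Ioi (0:ℝ)).indicator
      (fun y => (fun _ : ℝ => (1:ℝ)) y * (y ^ (a - 1) * Real.exp ((βt - 1) * y))) y with hL1_def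
  set Lf : ℝ := ∫ y, (Set.Ioi (0:ℝ)).indicator
      (fun y => f y * (y ^ (a - 1) * Real.exp ((βt - 1) * y))) y with hLf_def
  have hL1 : L1 = (1 / (1 - βt)) ^ a * Real.Gamma a := by
    rw [hL1_def, integral_indicator measurableSet_Ioi,
      ← integral_rpow_mul_exp_neg_mul_Ioi ha h1β]
    apply setIntegral_congr_fun measurableSet_Ioi
    intro y hy
    simp only [one_mul]
    rw [show (βt - 1) * y = -((1 - βt) * y) by ring]
  have hL1pos : 0 < L1 := by
    rw [hL1]; positivity
  have hratio : Tendsto (fun n : ℕ =>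
      (∫ y, (Set.Ioc (0:ℝ) (n:ℝ)).indicator
        (fun y => f y * (y ^ (a - 1) * (1 - y / n) ^ (θ₂ + n - 1) * Real.exp (βt * y))) y) /
      (∫ y, (Set.Ioc (0:ℝ) (n:ℝ)).indicator
        (fun y => (fun _ : ℝ => (1:ℝ)) y *
          (y ^ (a - 1) * (1 - y / n) ^ (θ₂ + n - 1) * Real.exp (βt * y))) y))
      atTop (𝓝 (Lf / L1)) := hdf.div hd1 hL1pos.ne'
  -- identify the limit value
  have hT : (∫ y in Set.Ioi (0:ℝ),
        f y * ((1 - βt) ^ ((n₁ : ℝ) + θ₁) / Real.Gamma ((n₁ : ℝ) + θ₁) *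
          y ^ ((n₁ : ℝ) + θ₁ - 1) * Real.exp ((βt - 1) * y))) = Lf / L1 := by
    have hAa : (n₁ : ℝ) + θ₁ = a := by rw [ha_def]; ring
    have hLf' : Lf = ∫ y in Set.Ioi (0:ℝ), f y * (y ^ (a - 1) * Real.exp ((βt - 1) * y)) := by
      rw [hLf_def, integral_indicator measurableSet_Ioi]
    have hmul : ((1:ℝ) / (1 - βt)) ^ a * (1 - βt) ^ a = 1 := by
      rw [← Real.mul_rpow (by positivity) h1β.le, one_div_mul_cancel h1β.ne', Real.one_rpow]
    have hinv : L1⁻¹ = (1 - βt) ^ a / Real.Gamma a := by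
      apply inv_eq_of_mul_eq_one_right
      rw [hL1]
      calc (1 / (1 - βt)) ^ a * Real.Gamma a * ((1 - βt) ^ a / Real.Gamma a)
          = ((1 / (1 - βt)) ^ a * (1 - βt) ^ a) * (Real.Gamma a / Real.Gamma a) := by ring
        _ = 1 := by rw [hmul, div_self hΓ.ne', one_mul]
    rw [show Lf / L1 = ((1 - βt) ^ a / Real.Gamma a) * Lf by
      rw [div_eq_mul_inv, hinv]; ring]
    rw [hLf', ← integral_const_mul]
    apply setIntegral_congr_fun measurableSet_Ioi
    intro y hy
    rw [hAa]
    ring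
  rw [hT]
  apply hratio.congr'
  filter_upwards [eventually_ge_atTop 1] with n hn
  have hn0 : (0:ℝ) < n := by exact_mod_cast hn
  have hne : ((n:ℝ) ^ (-a)) ≠ 0 := (Real.rpow_pos_of_pos hn0 _).ne'
  have hnum := subst_lemma a θ₂ βt f hn
  have hden := subst_lemma a θ₂ βt (fun _ : ℝ => (1:ℝ)) hn
  calc (∫ y, (Set.Ioc (0:ℝ) (n:ℝ)).indicator
        (fun y => f y * (y ^ (a - 1) * (1 - y / n) ^ (θ₂ + n - 1) * Real.exp (βt * y))) y) /
      (∫ y, (Set.Ioc (0:ℝ) (n:ℝ)).indicator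
        (fun y => (fun _ : ℝ => (1:ℝ)) y *
          (y ^ (a - 1) * (1 - y / n) ^ (θ₂ + n - 1) * Real.exp (βt * y))) y)
      = ((n:ℝ) ^ (-a) * ∫ y, (Set.Ioc (0:ℝ) (n:ℝ)).indicator
        (fun y => f y * (y ^ (a - 1) * (1 - y / n) ^ (θ₂ + n - 1) * Real.exp (βt * y))) y) /
        ((n:ℝ) ^ (-a) * ∫ y, (Set.Ioc (0:ℝ) (n:ℝ)).indicator
        (fun y => (fun _ : ℝ => (1:ℝ)) y *
          (y ^ (a - 1) * (1 - y / n) ^ (θ₂ + n - 1) * Real.exp (βt * y))) y) := by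
        rw [mul_div_mul_left _ _ hne]
    _ = (∫ x in (0:ℝ)..1,
          f (n * x) * (x ^ (a - 1) * (1 - x) ^ (θ₂ + n - 1) * Real.exp (βt * n * x))) /
        (∫ x in (0:ℝ)..1,
          (fun _ : ℝ => (1:ℝ)) (n * x) *
            (x ^ (a - 1) * (1 - x) ^ (θ₂ + n - 1) * Real.exp (βt * n * x))) := by
        rw [hnum, hden]
    _ = (∫ x in (0:ℝ)..1,
          f (n * x) * (x ^ (a - 1) * (1 - x) ^ (θ₂ + n - 1) * Real.exp (βt * n * x))) /
        (∫ y in (0:ℝ)..1,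
          y ^ (a - 1) * (1 - y) ^ (θ₂ + n - 1) * Real.exp (βt * n * y)) := by
        congr 1
        apply intervalIntegral.integral_congr
        intro x _
        simp only [one_mul]
    _ = ∫ x in (0:ℝ)..1,
          f (n * x) *
            (x ^ (a - 1) * (1 - x) ^ (θ₂ + n - 1) * Real.exp (βt * n * x) /
              ∫ y in (0:ℝ)..1,
                y ^ (a - 1) * (1 - y) ^ (θ₂ + n - 1) * Real.exp (βt * n * y)) := by
        rw [← intervalIntegral.integral_div]
        apply intervalIntegral.integral_congr
        intro x _
        simp only []
        rw [mul_div_assoc]
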